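/- Let X be a Banach space with a basis that is strongly asymptotically ℓ∞. Then X is locally minimal. -/

import Mathlib

open scoped BigOperators Classical

noncomputable section

section Prelude

variable {X : Type*} [NormedAddCommGroup X] [NormedSpace ℝ X]

/-- The vector with finitely supported coefficients `c` with respect to the sequence `e`. -/
def vecOf (e : ℕ → X) (c : ℕ →₀ ℝ) : X := c.sum fun n a => a • e n

/-- `c < d` : the supports of `c` and `d` are successive. -/
def FsuppLt (c d : ℕ →₀ ℝ) : Prop := ∀ a ∈ c.support, ∀ b ∈ d.support, a < b

/-- The Gowers–Maurey function `f(n) = log₂(n+1)`. -/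
def flog (n : ℕ) : ℝ := Real.logb 2 ((n : ℝ) + 1)

/-- Support of a functional with respect to the basis `e` (via biorthogonal functionals). -/
def fsupp (e : ℕ → X) (f : X →L[ℝ] ℝ) : Set ℕ := {n | f (e n) ≠ 0}

/-- Bimonotonicity of the basis `e`, expressed on finitely supported vectors:
projections onto intervals are contractive. -/
def Bimonotone (e : ℕ → X) : Prop :=
  ∀ (c : ℕ →₀ ℝ) (a b : ℕ), ‖vecOf e (c.filter fun n => n ∈ Finset.Icc a b)‖ ≤ ‖vecOf e c‖

/-- Lower `f`-estimate for a general function `f`. -/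
def LowerEst (e : ℕ → X) (f : ℝ → ℝ) : Prop :=
  ∀ (n : ℕ) (c : Fin n → ℕ →₀ ℝ), (∀ i j : Fin n, i < j → FsuppLt (c i) (c j)) →
    (1 / f (n : ℝ)) * ∑ i, ‖vecOf e (c i)‖ ≤ ‖∑ i, vecOf e (c i)‖

/-- Lower `f`-estimate with `f(n) = log₂(n+1)`. -/
def LowerFEst (e : ℕ → X) : Prop :=
  ∀ (n : ℕ) (c : Fin n → ℕ →₀ ℝ), (∀ i j : Fin n, i < j → FsuppLt (c i) (c j)) →
    (1 / flog n) * ∑ i, ‖vecOf e (c i)‖ ≤ ‖∑ i, vecOf e (c i)‖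

/-- `Y` embeds isomorphically into `Z` (linear isomorphism onto its image). -/
def Embeds (Y Z : Type*) [NormedAddCommGroup Y] [NormedSpace ℝ Y]
    [NormedAddCommGroup Z] [NormedSpace ℝ Z] : Prop :=
  ∃ T : Y →L[ℝ] Z, ∃ c : ℝ, 0 < c ∧ ∀ y, c * ‖y‖ ≤ ‖T y‖

/-- `Y` embeds into `Z` with constant `K` (i.e. `‖T‖ ⬝ ‖T⁻¹‖ ≤ K` after normalisation). -/
def EmbedsWithConst (K : ℝ) (Y Z : Type*) [NormedAddCommGroup Y] [NormedSpace ℝ Y]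
    [NormedAddCommGroup Z] [NormedSpace ℝ Z] : Prop :=
  ∃ T : Y →L[ℝ] Z, ∀ y, ‖y‖ ≤ ‖T y‖ ∧ ‖T y‖ ≤ K * ‖y‖

/-- The closed span `[eₙ : n ∉ S]`. -/
def spanCompl (e : ℕ → X) (S : Set ℕ) : Submodule ℝ X :=
  (Submodule.span ℝ (e '' Sᶜ)).topologicalClosure

/-- `Y` is tight in the basic sequence `e`. -/
def TightIn (e : ℕ → X) (Y : Type*) [NormedAddCommGroup Y] [NormedSpace ℝ Y] : Prop :=
  ∃ I : ℕ → Finset ℕ, (∀ i j : ℕ, i < j → ∀ a ∈ I i, ∀ b ∈ I j, a < b) ∧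
    ∀ A : Set ℕ, A.Infinite → ¬ Embeds Y ↥(spanCompl e (⋃ i ∈ A, (I i : Set ℕ)))

/-- The basis `e` is tight: every infinite-dimensional Banach space is tight in it. -/
def TightBasis (e : ℕ → X) : Prop :=
  ∀ (Y : Type) [NormedAddCommGroup Y] [NormedSpace ℝ Y] [CompleteSpace Y],
    ¬ FiniteDimensional ℝ Y → TightIn e Y

end Prelude

/-!
A finite-dimensional space `F` embeds into `ℓ∞ⁿ` with distortion 2 through a `1/2`-net
`f₁, …, fₙ` of the unit ball of its dual. In an infinite-dimensional subspace `Z`, each tail space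
`[eₖ : k ≥ N]` has finite codimension (as `e` spans a dense subspace), so it contains unit vectors
of `Z`; approximating these by finitely supported vectors gives unit vectors `z₁, …, zₙ ∈ Z`, each
close to a normalized block beyond `f(n)`, the blocks being disjoint. The blocks are `C`-equivalent
to the `ℓ∞ⁿ` basis, hence after perturbation the `zᵢ` are `4C²`-equivalent to it, and
`y ↦ ∑ fᵢ(y) zᵢ` embeds `F` into `Z` with a constant `8C²` depending on neither `F` nor `Z`.
-/

section LinftyBounds

variable {E : Type*} [NormedAddCommGroup E] [NormedSpace ℝ E] {ι : Type*} [Fintype ι]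

/-- `x` is equivalent to the unit vector basis of `ℓ∞(ι)`, with lower constant `A` and upper
constant `B`. -/
def LinftyBounds (A B : ℝ) (x : ι → E) : Prop :=
  ∀ a : ι → ℝ, A * (⨆ i, |a i|) ≤ ‖∑ i, a i • x i‖ ∧ ‖∑ i, a i • x i‖ ≤ B * ⨆ i, |a i|

lemma abs_le_iSup_abs (a : ι → ℝ) (i : ι) : |a i| ≤ ⨆ j, |a j| :=
  le_ciSup (f := fun j => |a j|) (Set.finite_range _).bddAbove i

namespace LinftyBounds

variable {A B : ℝ} {x : ι → E}

lemma mono (h : LinftyBounds A B x) {A' B' : ℝ} (hA : A' ≤ A) (hB : B ≤ B') :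
    LinftyBounds A' B' x := by
  intro a
  have hs : 0 ≤ ⨆ i, |a i| := Real.iSup_nonneg fun i => abs_nonneg (a i)
  obtain ⟨hl, hu⟩ := h a
  exact ⟨(mul_le_mul_of_nonneg_right hA hs).trans hl, hu.trans (mul_le_mul_of_nonneg_right hB hs)⟩

lemma le_norm_and_norm_le (h : LinftyBounds A B x) (i : ι) : A ≤ ‖x i‖ ∧ ‖x i‖ ≤ B := by
  have hsup : (⨆ j, |Pi.single i (1 : ℝ) j|) = 1 := by
    refine le_antisymm (Real.iSup_le (fun j => ?_) zero_le_one) ?_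
    · by_cases hj : j = i <;> simp [hj]
    · simpa using abs_le_iSup_abs (Pi.single i (1 : ℝ)) i
  have := h (Pi.single i 1)
  rw [hsup] at this
  simpa [Pi.single_apply] using this

lemma of_norm_eq_one {C d : ℝ} (h : LinftyBounds d (C * d) x) (hx : ∀ i, ‖x i‖ = 1)
    (hC : 0 < C) : LinftyBounds C⁻¹ C x := by
  rcases isEmpty_or_nonempty ι with hι | ⟨⟨i⟩⟩
  · intro a
    simp
  · obtain ⟨hd, hCd⟩ := h.le_norm_and_norm_le i
    rw [hx i] at hd hCd
    exact h.mono ((inv_le_iff_one_le_mul₀ hC).2 (by linarith [mul_comm C d])) (by nlinarith)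

lemma of_norm_sub_le (h : LinftyBounds A B x) {y : ι → E} {δ : ℝ}
    (hδ : ∀ i, ‖y i - x i‖ ≤ δ) :
    LinftyBounds (A - Fintype.card ι * δ) (B + Fintype.card ι * δ) y := by
  intro a
  set s := ⨆ i, |a i|
  have hdiff : ‖∑ i, a i • y i - ∑ i, a i • x i‖ ≤ Fintype.card ι * δ * s :=
    calc ‖∑ i, a i • y i - ∑ i, a i • x i‖ = ‖∑ i, a i • (y i - x i)‖ := by
          simp only [smul_sub, Finset.sum_sub_distrib]
      _ ≤ ∑ i, |a i| * ‖y i - x i‖ := (norm_sum_le _ _).trans_eq (by simp [norm_smul])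
      _ ≤ ∑ _i : ι, s * δ := Finset.sum_le_sum fun i _ =>
          mul_le_mul (abs_le_iSup_abs a i) (hδ i) (norm_nonneg _)
            ((abs_nonneg _).trans (abs_le_iSup_abs a i))
      _ = Fintype.card ι * δ * s := by simp [Finset.card_univ]; ring
  obtain ⟨hl, hu⟩ := h a
  have h₁ := norm_sub_norm_le (∑ i, a i • x i) (∑ i, a i • y i)
  have h₂ := norm_sub_norm_le (∑ i, a i • y i) (∑ i, a i • x i)
  rw [norm_sub_rev] at h₁
  constructor <;> linarith

lemma of_coe {p : Submodule ℝ E} {z : ι → p} (h : LinftyBounds A B fun i => (z i : E)) :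
    LinftyBounds A B z := by
  intro a
  simpa only [← Submodule.coe_smul, ← Submodule.coe_sum, Submodule.coe_norm] using h a

end LinftyBounds

lemma exists_norming_functionals (F : Type*) [NormedAddCommGroup F] [NormedSpace ℝ F]
    [FiniteDimensional ℝ F] :
    ∃ (n : ℕ) (f : Fin n → StrongDual ℝ F), (∀ i, ‖f i‖ ≤ 1) ∧ ∀ y, ‖y‖ ≤ 2 * ⨆ i, |f i y| := by
  obtain ⟨t, ht_ball, ht_fin, hcover⟩ :=
    finite_cover_balls_of_compact (isCompact_closedBall (0 : StrongDual ℝ F) 1) one_half_pos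
  let f : Fin ht_fin.toFinset.card → StrongDual ℝ F := fun i => ht_fin.toFinset.equivFin.symm i
  refine ⟨_, f, fun i => ?_, fun y => ?_⟩
  · simpa using ht_ball (ht_fin.mem_toFinset.1 (ht_fin.toFinset.equivFin.symm i).2)
  · obtain ⟨g, hg_le, hgy⟩ := exists_dual_vector'' ℝ y
    obtain ⟨h, hh, hgh⟩ := Set.mem_iUnion₂.1 (hcover (mem_closedBall_zero_iff.2 hg_le))
    let i := ht_fin.toFinset.equivFin ⟨h, ht_fin.mem_toFinset.2 hh⟩
    have hfi : f i = h := by simp [f, i]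
    have hgh_y : |(g - h) y| ≤ ‖y‖ / 2 := by
      have := (g - h).le_opNorm y
      rw [Metric.mem_ball, dist_eq_norm] at hgh
      rw [← Real.norm_eq_abs]
      nlinarith [norm_nonneg y]
    have := abs_le_iSup_abs (fun i => f i y) i
    simp only [hfi, sub_apply, hgy, RCLike.ofReal_real_eq_id, id] at this hgh_y
    linarith [le_abs_self (h y), abs_le.1 hgh_y]

lemma embedsWithConst_of_linftyBounds {F : Type*} [NormedAddCommGroup F] [NormedSpace ℝ F]
    (f : ι → StrongDual ℝ F) (hf_le : ∀ i, ‖f i‖ ≤ 1) (hf : ∀ y, ‖y‖ ≤ 2 * ⨆ i, |f i y|)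
    {z : ι → E} {A B : ℝ} (hA : 0 < A) (hz : LinftyBounds A B z) :
    EmbedsWithConst (2 * B / A) F E := by
  refine ⟨(2 / A) • ∑ i, (f i).smulRight (z i), fun y => ?_⟩
  obtain ⟨hl, hu⟩ := hz fun i => f i y
  have hy := hf y
  set s := ⨆ i, |f i y|
  have hs : s ≤ ‖y‖ := Real.iSup_le (fun i => by
    simpa [← Real.norm_eq_abs] using ((f i).le_opNorm y).trans
      (mul_le_of_le_one_left (norm_nonneg y) (hf_le i))) (norm_nonneg y)
  have hTy : ‖((2 / A) • ∑ i, (f i).smulRight (z i)) y‖ = 2 / A * ‖∑ i, f i y • z i‖ := by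
    simp [norm_smul, abs_of_pos hA]
  rw [hTy, div_mul_eq_mul_div, div_mul_eq_mul_div, le_div_iff₀ hA, div_le_div_iff_of_pos_right hA]
  constructor
  · nlinarith
  · have hBs : B * s ≤ B * ‖y‖ := by
      rcases (Real.iSup_nonneg fun i => abs_nonneg (f i y) : 0 ≤ s).eq_or_lt with hs0 | hs0
      · rw [show ‖y‖ = s by linarith [norm_nonneg y]]
      · have hAB : A ≤ B := le_of_mul_le_mul_right (hl.trans hu) hs0
        exact mul_le_mul_of_nonneg_left hs (by linarith)
    linarith

end LinftyBounds

lemma norm_sub_inv_norm_smul_le {E : Type*} [NormedAddCommGroup E] [NormedSpace ℝ E] {z : E}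
    (hz : ‖z‖ = 1) (x : E) : ‖z - ‖x‖⁻¹ • x‖ ≤ 2 * ‖z - x‖ := by
  rcases eq_or_ne x 0 with rfl | hx
  · simp [hz]
  · have hx' : ‖x - ‖x‖⁻¹ • x‖ ≤ ‖z - x‖ :=
      calc ‖x - ‖x‖⁻¹ • x‖ = |‖x‖ - ‖z‖| := by
            have hpos : 0 < ‖x‖ := norm_pos_iff.2 hx
            rw [hz, show x - ‖x‖⁻¹ • x = (1 - ‖x‖⁻¹) • x by rw [sub_smul, one_smul],
              norm_smul, Real.norm_eq_abs,
              show ‖x‖ - 1 = (1 - ‖x‖⁻¹) * ‖x‖ by field_simp, abs_mul, abs_of_pos hpos]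
        _ ≤ ‖z - x‖ := by rw [norm_sub_rev z x]; exact abs_norm_sub_norm_le x z
    linarith [norm_sub_le_norm_sub_add_norm_sub z x (‖x‖⁻¹ • x)]

lemma exists_seq_pairwise_disjoint_support {M : Type*} [Zero M] {P : (ℕ →₀ M) → Prop}
    (h : ∀ N : ℕ, ∃ c : ℕ →₀ M, (∀ k ∈ c.support, N ≤ k) ∧ P c) (N : ℕ) :
    ∃ c : ℕ → ℕ →₀ M, (∀ i, (∀ k ∈ (c i).support, N ≤ k) ∧ P (c i)) ∧
      Pairwise fun i j => Disjoint (c i).support (c j).support := by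
  choose g hg_ge hg using h
  -- the `i`-th block starts beyond the supports of all earlier blocks
  let start : ℕ → ℕ := fun i => Nat.rec N (fun _ m => m + (g m).support.sup id + 1) i
  have start_succ (i : ℕ) : start (i + 1) = start i + (g (start i)).support.sup id + 1 := rfl
  have start_mono : Monotone start := monotone_nat_of_le_succ fun i => by rw [start_succ]; omega
  have lt_start_succ (i : ℕ) : ∀ k ∈ (g (start i)).support, k < start (i + 1) := fun k hk => by
    have := Finset.le_sup (f := id) hk
    rw [start_succ]
    simp only [id] at this
    omega
  refine ⟨fun i => g (start i),
    fun i => ⟨fun k hk => (start_mono (Nat.zero_le i)).trans (hg_ge _ k hk), hg _⟩, ?_⟩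
  intro i j hij
  wlog hlt : i < j generalizing i j
  · exact (this hij.symm (lt_of_le_of_ne (not_lt.1 hlt) hij.symm)).symm
  refine Finset.disjoint_left.2 fun k hki hkj => ?_
  have := lt_start_succ i k hki
  have := start_mono (show i + 1 ≤ j from hlt)
  have := hg_ge _ k hkj
  omega

section Basis

variable {X : Type*} [NormedAddCommGroup X] [NormedSpace ℝ X] (e : ℕ → X)

lemma vecOf_eq_linearCombination (c : ℕ →₀ ℝ) : vecOf e c = Finsupp.linearCombination ℝ e c :=
  (Finsupp.linearCombination_apply ℝ c).symm

lemma vecOf_smul (t : ℝ) (c : ℕ →₀ ℝ) : vecOf e (t • c) = t • vecOf e c := by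
  simp [vecOf_eq_linearCombination]

lemma exists_vecOf_near_of_mem_spanCompl {S : Set ℕ} {z : X} (hz : z ∈ spanCompl e S) {ε : ℝ}
    (hε : 0 < ε) : ∃ c : ℕ →₀ ℝ, ↑c.support ⊆ Sᶜ ∧ ‖z - vecOf e c‖ < ε := by
  obtain ⟨y, hy, hzy⟩ := Metric.mem_closure_iff.1 hz ε hε
  obtain ⟨c, hc, rfl⟩ := (Finsupp.mem_span_image_iff_linearCombination ℝ).1 hy
  exact ⟨c, hc, by rwa [vecOf_eq_linearCombination, ← dist_eq_norm]⟩

variable {e}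

lemma exists_norm_eq_one_mem_spanCompl_Iio
    (hbasis : (Submodule.span ℝ (Set.range e)).topologicalClosure = ⊤)
    {Z : Submodule ℝ X} (hZ : ¬ FiniteDimensional ℝ Z) (N : ℕ) :
    ∃ z ∈ Z, z ∈ spanCompl e (Set.Iio N) ∧ ‖z‖ = 1 := by
  set V := spanCompl e (Set.Iio N)
  set W := Submodule.span ℝ (e '' Set.Iio N)
  have hW : W.FG := Submodule.fg_span ((Set.finite_Iio N).image e)
  have : FiniteDimensional ℝ W := Module.Finite.iff_fg.2 hW
  have hcodisj : Codisjoint V W := by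
    rw [codisjoint_iff, eq_top_iff, ← hbasis]
    refine Submodule.topologicalClosure_minimal _ (Submodule.span_le.2 ?_)
      (V.isClosed_sup_finiteDimensional W (Submodule.isClosed_topologicalClosure _))
    rintro _ ⟨k, rfl⟩
    by_cases hk : k < N
    · exact Submodule.mem_sup_right (Submodule.subset_span ⟨k, hk, rfl⟩)
    · exact Submodule.mem_sup_left (Submodule.le_topologicalClosure _
        (Submodule.subset_span ⟨k, hk, rfl⟩))
  have hZV : Z ⊓ V ≠ ⊥ := fun h => hZ <| Module.Finite.iff_fg.2 <|
    (hW.cofg_of_codisjoint hcodisj.symm).fg_of_disjoint (disjoint_iff.2 h)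
  obtain ⟨z, hz, hz0⟩ := Submodule.exists_mem_ne_zero_of_ne_bot hZV
  exact ⟨‖z‖⁻¹ • z, Z.smul_mem _ hz.1, V.smul_mem _ hz.2, norm_smul_inv_norm hz0⟩

lemma exists_normalized_block_near
    (hbasis : (Submodule.span ℝ (Set.range e)).topologicalClosure = ⊤)
    {Z : Submodule ℝ X} (hZ : ¬ FiniteDimensional ℝ Z) {δ : ℝ} (hδ : 0 < δ) (N : ℕ) :
    ∃ c : ℕ →₀ ℝ, (∀ k ∈ c.support, N ≤ k) ∧ ‖vecOf e c‖ = 1 ∧ ∃ z ∈ Z, ‖z - vecOf e c‖ ≤ δ := by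
  obtain ⟨z, hzZ, hzV, hz⟩ := exists_norm_eq_one_mem_spanCompl_Iio hbasis hZ N
  obtain ⟨c, hc, hzc⟩ := exists_vecOf_near_of_mem_spanCompl e hzV (lt_min (half_pos hδ) one_pos)
  have hx : vecOf e c ≠ 0 := by
    rintro h
    rw [h, sub_zero, hz] at hzc
    exact lt_irrefl _ (hzc.trans_le (min_le_right _ _))
  refine ⟨‖vecOf e c‖⁻¹ • c, fun k hk => ?_, ?_, z, hzZ, ?_⟩
  · simpa using hc (Finset.mem_coe.2 (Finsupp.support_smul hk))
  · rw [vecOf_smul]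
    exact norm_smul_inv_norm hx
  · rw [vecOf_smul]
    linarith [norm_sub_inv_norm_smul_le hz (vecOf e c), min_le_left (δ / 2) 1]

variable (e) in
def IsStronglyAsymptoticLinfty (C : ℝ) (f : ℕ → ℕ) : Prop :=
  ∀ (n : ℕ) (c : Fin n → ℕ →₀ ℝ), (∀ i, ‖vecOf e (c i)‖ = 1) →
    (∀ i, ∀ k ∈ (c i).support, f n ≤ k) →
    (∀ i j : Fin n, i ≠ j → Disjoint (c i).support (c j).support) →
    ∃ d : ℝ, 0 < d ∧ LinftyBounds d (C * d) fun i => vecOf e (c i)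

lemma exists_linftyBounds_of_isStronglyAsymptoticLinfty
    (hbasis : (Submodule.span ℝ (Set.range e)).topologicalClosure = ⊤)
    {C : ℝ} (hC : 1 ≤ C) {f : ℕ → ℕ} (hasym : IsStronglyAsymptoticLinfty e C f)
    {Z : Submodule ℝ X} (hZ : ¬ FiniteDimensional ℝ Z) (n : ℕ) :
    ∃ z : Fin n → Z, LinftyBounds (2 * C)⁻¹ (2 * C) z := by
  have hC0 : 0 < C := one_pos.trans_le hC
  set δ : ℝ := (2 * C * (n + 1))⁻¹
  obtain ⟨c, hc, hdisj⟩ := exists_seq_pairwise_disjoint_support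
    (exists_normalized_block_near hbasis hZ (by positivity : 0 < δ)) (f n)
  choose z hzZ hz using fun i => (hc i).2.2
  obtain ⟨d, -, hd⟩ := hasym n (fun i => c i) (fun i => (hc i).2.1) (fun i => (hc i).1)
    fun i j hij => hdisj (Fin.val_injective.ne hij)
  have hz' := (hd.of_norm_eq_one (fun i => (hc i).2.1) hC0).of_norm_sub_le
    fun i : Fin n => hz i
  have hnδ : n * δ ≤ (2 * C)⁻¹ :=
    calc n * δ = (2 * C)⁻¹ * (n / (n + 1)) := by simp only [δ]; field_simp
      _ ≤ (2 * C)⁻¹ * 1 := by gcongr; exact div_le_one_of_le₀ (by linarith) (by positivity)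
      _ = (2 * C)⁻¹ := mul_one _
  have hC_inv : C⁻¹ = 2 * (2 * C)⁻¹ := by field_simp
  have hC_half : (2 * C)⁻¹ ≤ C := by
    rw [inv_le_iff_one_le_mul₀ (by positivity)]
    nlinarith
  refine ⟨fun i => ⟨z i, hzZ i⟩, LinftyBounds.of_coe (hz'.mono ?_ ?_)⟩ <;>
    simp only [Fintype.card_fin] <;> linarith

end Basis

theorem stmt8_general {X : Type} [NormedAddCommGroup X] [NormedSpace ℝ X]
    (e : ℕ → X)
    (hbasis : (Submodule.span ℝ (Set.range e)).topologicalClosure = ⊤)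
    (C : ℝ) (hC : 1 ≤ C) (fg : ℕ → ℕ)
    (hasym : ∀ (n : ℕ) (c : Fin n → ℕ →₀ ℝ),
      (∀ i, ‖vecOf e (c i)‖ = 1) →
      (∀ i, ∀ k ∈ (c i).support, fg n ≤ k) →
      (∀ i j : Fin n, i ≠ j → Disjoint (c i).support (c j).support) →
      ∃ d : ℝ, 0 < d ∧ ∀ a : Fin n → ℝ,
        d * (⨆ i, |a i|) ≤ ‖∑ i, a i • vecOf e (c i)‖ ∧
        ‖∑ i, a i • vecOf e (c i)‖ ≤ C * d * (⨆ i, |a i|)) :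
    ∃ K : ℝ, 1 ≤ K ∧ ∀ Z : Submodule ℝ X, IsClosed (Z : Set X) →
      ¬ FiniteDimensional ℝ Z →
      ∀ F : Submodule ℝ X, FiniteDimensional ℝ F → EmbedsWithConst K ↥F ↥Z := by
  have hC0 : 0 < C := one_pos.trans_le hC
  refine ⟨8 * C ^ 2, by nlinarith, fun Z _ hZ F _ => ?_⟩
  obtain ⟨n, f, hf_le, hf⟩ := exists_norming_functionals F
  obtain ⟨z, hz⟩ := exists_linftyBounds_of_isStronglyAsymptoticLinfty hbasis hC hasym hZ n
  have hK : 2 * (2 * C) / (2 * C)⁻¹ = 8 * C ^ 2 := by field_simp; ring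
  simpa only [hK] using embedsWithConst_of_linftyBounds f hf_le hf (by positivity) hz

/-- a space with a strongly asymptotically `ℓ∞` basis is locally minimal. -/
theorem stmt8 {X : Type} [NormedAddCommGroup X] [NormedSpace ℝ X] [CompleteSpace X]
    (e : ℕ → X)
    (hbasis : (Submodule.span ℝ (Set.range e)).topologicalClosure = ⊤)
    (C : ℝ) (hC : 1 ≤ C) (fg : ℕ → ℕ)
    (hasym : ∀ (n : ℕ) (c : Fin n → ℕ →₀ ℝ),
      (∀ i, ‖vecOf e (c i)‖ = 1) →
      (∀ i, ∀ k ∈ (c i).support, fg n ≤ k) →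
      (∀ i j : Fin n, i ≠ j → Disjoint (c i).support (c j).support) →
      ∃ d : ℝ, 0 < d ∧ ∀ a : Fin n → ℝ,
        d * (⨆ i, |a i|) ≤ ‖∑ i, a i • vecOf e (c i)‖ ∧
        ‖∑ i, a i • vecOf e (c i)‖ ≤ C * d * (⨆ i, |a i|)) :
    ∃ K : ℝ, 1 ≤ K ∧ ∀ Z : Submodule ℝ X, IsClosed (Z : Set X) →
      ¬ FiniteDimensional ℝ Z →
      ∀ F : Submodule ℝ X, FiniteDimensional ℝ F → EmbedsWithConst K ↥F ↥Z :=
  stmt8_general e hbasis C hC fg hasym
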